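/- In a Clifford algebra with n ≡ 0 mod 4, the element T = 1 + 2 e_{1…n} is invertible, lies in Q′ but not Q: reverse(T)·T = 1 + 4(e_{1…n})² + 4 e_{1…n} ∈ (C^0 ⊕ C^n)^× but not in Z^× = C^{×0}. Hence Q ≠ Q′ for n ≡ 0 mod 4. -/

import Mathlib

/-!
The pseudoscalar `ω = e_1 ⋯ e_n` satisfies `reverse ω = (-1)^(n choose 2) ω` and
`ω * reverse ω = ∏ Q(e_a)`, so for `4 ∣ n` it is self-reverse and `ω² = c` with `c = ±1`.
Then `reverse T * T = T² = (1 + 4c) + 4ω`, and `T` is invertible since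
`(1 + 2ω)(1 - 2ω) = 1 - 4c ≠ 0`. As `n` is even, `ω` anticommutes with each generator `e_a`,
so `(1 + 4c) + 4ω` does not commute with `e_a`.
-/

open CliffordAlgebra

noncomputable section

variable {n : ℕ} (Q : QuadraticForm ℝ (Fin n → ℝ))

/-- The standard generators `e_a` of the Clifford algebra. -/
def egen (a : Fin n) : CliffordAlgebra Q := ι Q (Pi.single a 1)

/-- The ordered product of generators indexed by a finite set. -/
def eProd (s : Finset (Fin n)) : CliffordAlgebra Q :=
  ((s.sort (· ≤ ·)).map (egen Q)).prod

/-- The grade-`k` subspace `C^k`, spanned by the products of `k` distinct generators. -/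
def gradeSubmodule (k : ℕ) : Submodule ℝ (CliffordAlgebra Q) :=
  Submodule.span ℝ {x | ∃ s : Finset (Fin n), s.card = k ∧ x = eProd Q s}

/-- The set `Z^× (C^{×(0)} ∪ C^{×(1)})` : invertible central elements times
invertible even or odd elements. -/
def Pset : Set (CliffordAlgebra Q) :=
  {T | ∃ W T₀ : CliffordAlgebra Q,
    W ∈ Subalgebra.center ℝ (CliffordAlgebra Q) ∧ IsUnit W ∧
    (T₀ ∈ evenOdd Q 0 ∨ T₀ ∈ evenOdd Q 1) ∧ IsUnit T₀ ∧ T = W * T₀}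

/-- `Q` is diagonal with entries `±1` in the standard basis (an orthonormal-type basis,
expressing nondegeneracy of `Q`). -/
def DiagQ : Prop :=
  (∀ a, Q (Pi.single a 1) = 1 ∨ Q (Pi.single a 1) = -1) ∧
  (∀ a b : Fin n, a ≠ b → QuadraticMap.polar Q (Pi.single a 1) (Pi.single b 1) = 0)

section Algebra

variable {K A : Type*} [Field K] [Ring A] [Algebra K A]

lemma isUnit_of_mul_self_eq_algebraMap {ω : A} {c : K} (hω : ω * ω = algebraMap K A c)
    (hc : c ≠ 0) : IsUnit ω :=
  ((Commute.refl ω).isUnit_mul_iff.mp (hω ▸ (isUnit_iff_ne_zero.mpr hc).map _)).1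

lemma isUnit_one_add_smul_of_mul_self_eq_algebraMap {ω : A} {b c : K}
    (hω : ω * ω = algebraMap K A c) (h : b ^ 2 * c ≠ 1) : IsUnit (1 + b • ω) := by
  have hprod : ∀ s t : K,
      (1 + s • ω) * (1 + t • ω) = 1 + (s + t) • ω + (s * t) • (ω * ω) := by
    intro s t
    simp only [add_mul, mul_add, one_mul, mul_one, smul_mul_smul_comm, add_smul]
    abel
  have hcomm : Commute (1 + b • ω) (1 + (-b) • ω) := by
    rw [Commute, SemiconjBy, hprod, hprod, add_comm b, mul_comm b]
  have hunit : IsUnit ((1 + b • ω) * (1 + (-b) • ω)) := by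
    rw [hprod, add_neg_cancel, zero_smul, add_zero, hω, Algebra.smul_def, ← map_mul,
      ← map_one (algebraMap K A), ← map_add]
    exact (isUnit_iff_ne_zero.mpr (by contrapose! h; linear_combination -h)).map _
  exact (hcomm.isUnit_mul_iff.mp hunit).1

lemma algebraMap_add_smul_notMem_center [NeZero (2 : K)] {ω x : A} {a b : K} (hb : b ≠ 0)
    (hanti : ω * x = -(x * ω)) (hx : x * ω ≠ 0) :
    algebraMap K A a + b • ω ∉ Subalgebra.center K A := by
  rw [Subalgebra.mem_center_iff]
  intro hcen
  have h := hcen x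
  rw [mul_add, add_mul, Algebra.commutes, add_right_inj, mul_smul_comm, smul_mul_assoc,
    hanti, smul_neg, eq_neg_iff_add_eq_zero, ← two_smul K, smul_smul] at h
  exact hx ((smul_eq_zero.mp h).resolve_left (mul_ne_zero two_ne_zero hb))

end Algebra

section Generators

variable {Q}

lemma egen_mul_self (a : Fin n) :
    egen Q a * egen Q a = algebraMap ℝ _ (Q (Pi.single a 1)) :=
  ι_sq_scalar Q _

lemma egen_mul_egen_of_ne {a b : Fin n}
    (hab : QuadraticMap.polar Q (Pi.single a 1) (Pi.single b 1) = 0) :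
    egen Q a * egen Q b = -(egen Q b * egen Q a) := by
  have h := ι_mul_ι_add_swap (Q := Q) (Pi.single a 1) (Pi.single b 1)
  rw [hab, map_zero] at h
  exact eq_neg_of_add_eq_zero_left h

lemma prod_egen_mul_egen_of_notMem
    (hQ : Pairwise fun a b : Fin n => QuadraticMap.polar Q (Pi.single a 1) (Pi.single b 1) = 0)
    {a : Fin n} {l : List (Fin n)} (ha : a ∉ l) :
    (l.map (egen Q)).prod * egen Q a
      = ((-1 : ℝ) ^ l.length) • (egen Q a * (l.map (egen Q)).prod) := by
  induction l with
  | nil => simp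
  | cons b l ih =>
    obtain ⟨hab, hal⟩ := not_or.mp (List.mem_cons.not.mp ha)
    rw [List.map_cons, List.prod_cons, mul_assoc, ih hal, mul_smul_comm, ← mul_assoc,
      egen_mul_egen_of_ne (hQ (Ne.symm hab)), neg_mul, mul_assoc, smul_neg,
      List.length_cons, pow_succ, mul_neg_one, neg_smul]

lemma prod_egen_mul_egen_of_mem
    (hQ : Pairwise fun a b : Fin n => QuadraticMap.polar Q (Pi.single a 1) (Pi.single b 1) = 0)
    {a : Fin n} {l : List (Fin n)} (hl : l.Nodup) (ha : a ∈ l) :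
    (l.map (egen Q)).prod * egen Q a
      = ((-1 : ℝ) ^ (l.length + 1)) • (egen Q a * (l.map (egen Q)).prod) := by
  induction l with
  | nil => simp at ha
  | cons b l ih =>
    obtain ⟨hbl, hl⟩ := List.nodup_cons.mp hl
    rw [List.map_cons, List.prod_cons, mul_assoc, List.length_cons]
    rcases List.mem_cons.mp ha with rfl | hal
    · rw [prod_egen_mul_egen_of_notMem hQ hbl, mul_smul_comm, ← mul_assoc, pow_succ,
        pow_succ, mul_neg_one, mul_neg_one, neg_neg]
    · rw [ih hl hal, mul_smul_comm, ← mul_assoc, egen_mul_egen_of_ne (hQ ?_), neg_mul,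
        mul_assoc, smul_neg, pow_succ _ (l.length + 1), mul_neg_one, neg_smul]
      rintro rfl
      exact hbl hal

lemma reverse_prod_egen
    (hQ : Pairwise fun a b : Fin n => QuadraticMap.polar Q (Pi.single a 1) (Pi.single b 1) = 0)
    {l : List (Fin n)} (hl : l.Nodup) :
    reverse (Q := Q) (l.map (egen Q)).prod
      = ((-1 : ℝ) ^ (l.length.choose 2)) • (l.map (egen Q)).prod := by
  induction l with
  | nil => simp
  | cons a l ih =>
    obtain ⟨hal, hl⟩ := List.nodup_cons.mp hl
    rw [List.map_cons, List.prod_cons, reverse.map_mul, ih hl, egen, reverse_ι, ← egen,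
      smul_mul_assoc, prod_egen_mul_egen_of_notMem hQ hal, smul_smul, ← pow_add,
      List.length_cons, Nat.choose_succ_succ, Nat.choose_one_right, add_comm]

lemma prod_egen_mul_reverse (l : List (Fin n)) :
    (l.map (egen Q)).prod * reverse (Q := Q) (l.map (egen Q)).prod
      = algebraMap ℝ _ (l.map fun a => Q (Pi.single a 1)).prod := by
  induction l with
  | nil => simp
  | cons a l ih =>
    rw [List.map_cons, List.prod_cons, reverse.map_mul, egen, reverse_ι, ← egen, mul_assoc,
      ← mul_assoc _ _ (egen Q a), ih, Algebra.left_comm, egen_mul_self, ← map_mul,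
      mul_comm, List.map_cons, List.prod_cons]

lemma prod_egen_mem_evenOdd (l : List (Fin n)) :
    (l.map (egen Q)).prod ∈ evenOdd Q (l.length : ZMod 2) := by
  induction l with
  | nil => simpa using Submodule.one_le.mp (one_le_evenOdd_zero Q)
  | cons a l ih =>
    rw [List.map_cons, List.prod_cons, List.length_cons, Nat.cast_succ, add_comm]
    exact SetLike.mul_mem_graded (ι_mem_evenOdd_one Q _) ih

end Generators

section Blades

variable {Q}

lemma reverse_eProd
    (hQ : Pairwise fun a b : Fin n => QuadraticMap.polar Q (Pi.single a 1) (Pi.single b 1) = 0)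
    (s : Finset (Fin n)) :
    reverse (Q := Q) (eProd Q s) = ((-1 : ℝ) ^ (s.card.choose 2)) • eProd Q s := by
  rw [eProd, reverse_prod_egen hQ (Finset.sort_nodup _ _), Finset.length_sort]

lemma eProd_mul_reverse (s : Finset (Fin n)) :
    eProd Q s * reverse (Q := Q) (eProd Q s)
      = algebraMap ℝ _ (∏ a ∈ s, Q (Pi.single a 1)) := by
  rw [eProd, prod_egen_mul_reverse, ← Finset.prod_map_toList,
    ((Finset.sort_perm_toList s _).map _).prod_eq]

lemma eProd_mul_self
    (hQ : Pairwise fun a b : Fin n => QuadraticMap.polar Q (Pi.single a 1) (Pi.single b 1) = 0)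
    (s : Finset (Fin n)) :
    eProd Q s * eProd Q s
      = algebraMap ℝ _ ((-1 : ℝ) ^ (s.card.choose 2) * ∏ a ∈ s, Q (Pi.single a 1)) := by
  rw [map_mul, ← eProd_mul_reverse, reverse_eProd hQ, mul_smul_comm, ← Algebra.smul_def,
    smul_smul, ← mul_pow, neg_one_mul, neg_neg, one_pow, one_smul]

lemma eProd_mul_egen_of_mem
    (hQ : Pairwise fun a b : Fin n => QuadraticMap.polar Q (Pi.single a 1) (Pi.single b 1) = 0)
    {s : Finset (Fin n)} {a : Fin n} (ha : a ∈ s) :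
    eProd Q s * egen Q a = ((-1 : ℝ) ^ (s.card + 1)) • (egen Q a * eProd Q s) := by
  rw [eProd, prod_egen_mul_egen_of_mem hQ (Finset.sort_nodup _ _) (Finset.mem_sort _ |>.mpr ha),
    Finset.length_sort]

lemma eProd_mem_evenOdd (s : Finset (Fin n)) : eProd Q s ∈ evenOdd Q (s.card : ZMod 2) := by
  rw [eProd, ← Finset.length_sort (· ≤ ·)]
  exact prod_egen_mem_evenOdd _

lemma eProd_mem_gradeSubmodule (s : Finset (Fin n)) : eProd Q s ∈ gradeSubmodule Q s.card :=
  Submodule.subset_span ⟨s, rfl, rfl⟩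

lemma one_mem_gradeSubmodule_zero : (1 : CliffordAlgebra Q) ∈ gradeSubmodule Q 0 :=
  Submodule.subset_span ⟨∅, Finset.card_empty, by rw [eProd, Finset.sort_empty]; rfl⟩

end Blades

lemma sq_prod_eq_one {ι R : Type*} [CommRing R] (s : Finset ι) {f : ι → R}
    (hf : ∀ a ∈ s, f a = 1 ∨ f a = -1) : (∏ a ∈ s, f a) ^ 2 = 1 := by
  rw [← Finset.prod_pow]
  exact Finset.prod_eq_one fun a ha => by rcases hf a ha with h | h <;> simp [h]

lemma Nat.even_choose_two_of_four_dvd {n : ℕ} (h : 4 ∣ n) : Even (n.choose 2) := by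
  obtain ⟨m, rfl⟩ := h
  refine ⟨m * (4 * m - 1), ?_⟩
  rw [Nat.choose_two_right, show 4 * m * (4 * m - 1) = 2 * (m * (4 * m - 1) + m * (4 * m - 1))
    by ring, Nat.mul_div_cancel_left _ two_pos]

section Pseudoscalar

variable {Q}

lemma eProd_univ_mul_self_of_four_dvd
    (hQ : Pairwise fun a b : Fin n => QuadraticMap.polar Q (Pi.single a 1) (Pi.single b 1) = 0)
    (hn : 4 ∣ n) :
    eProd Q Finset.univ * eProd Q Finset.univ = algebraMap ℝ _ (∏ a, Q (Pi.single a 1)) := by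
  simpa [(Nat.even_choose_two_of_four_dvd hn).neg_one_pow] using eProd_mul_self hQ Finset.univ

lemma reverse_eProd_univ_of_four_dvd
    (hQ : Pairwise fun a b : Fin n => QuadraticMap.polar Q (Pi.single a 1) (Pi.single b 1) = 0)
    (hn : 4 ∣ n) : reverse (Q := Q) (eProd Q Finset.univ) = eProd Q Finset.univ := by
  simpa [(Nat.even_choose_two_of_four_dvd hn).neg_one_pow] using reverse_eProd hQ Finset.univ

lemma eProd_univ_mem_evenOdd_zero (hn : Even n) : eProd Q Finset.univ ∈ evenOdd Q 0 := by
  simpa [hn.natCast_zmod_two] using eProd_mem_evenOdd (Q := Q) Finset.univ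

lemma eProd_univ_mul_egen_of_even
    (hQ : Pairwise fun a b : Fin n => QuadraticMap.polar Q (Pi.single a 1) (Pi.single b 1) = 0)
    (hn : Even n) (a : Fin n) :
    eProd Q Finset.univ * egen Q a = -(egen Q a * eProd Q Finset.univ) := by
  rw [eProd_mul_egen_of_mem hQ (Finset.mem_univ a), Finset.card_univ, Fintype.card_fin,
    hn.add_one.neg_one_pow, neg_one_smul]

end Pseudoscalar

/-- For `n ≡ 0 mod 4`, `n ≠ 0`, the element `T = 1 + 2 e_{1…n}` lies in `Q'` but not
in `Q`: its norm `reverse(T) * T = 1 + 4 (e_{1…n})² + 4 e_{1…n}` is an invertible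
element of `C^0 ⊕ C^n` that is not central. Hence `Q ≠ Q'`. -/
theorem stmt14 (hQ : DiagQ Q) (hn : n % 4 = 0) (hn0 : n ≠ 0) :
    let ω : CliffordAlgebra Q := eProd Q Finset.univ
    let T : CliffordAlgebra Q := 1 + 2 * ω
    IsUnit T ∧ T ∈ evenOdd Q 0 ∧
      reverse (Q := Q) T * T = 1 + 4 * ω ^ 2 + 4 * ω ∧
      reverse (Q := Q) T * T ∈ gradeSubmodule Q 0 ⊔ gradeSubmodule Q n ∧
      IsUnit (reverse (Q := Q) T * T) ∧
      reverse (Q := Q) T * T ∉ Subalgebra.center ℝ (CliffordAlgebra Q) := by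
  intro ω T
  have h4 : 4 ∣ n := Nat.dvd_of_mod_eq_zero hn
  have hev : Even n := ⟨n / 2, by omega⟩
  set c := ∏ a, Q (Pi.single a 1)
  have hc : c ^ 2 = 1 := sq_prod_eq_one _ fun a _ => hQ.1 a
  have hωω : ω * ω = algebraMap ℝ _ c := eProd_univ_mul_self_of_four_dvd hQ.2 h4
  have hT : T = 1 + (2 : ℝ) • ω := by rw [Algebra.smul_def, map_ofNat]
  have hrevT : reverse (Q := Q) T = T := by
    rw [hT, map_add, map_smul, reverse_eProd_univ_of_four_dvd hQ.2 h4, reverse.map_one]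
  have hTT : reverse (Q := Q) T * T = 1 + 4 * ω ^ 2 + 4 * ω := by
    rw [hrevT]
    show (1 + 2 * ω) * (1 + 2 * ω) = _
    noncomm_ring
  have hTT' : reverse (Q := Q) T * T = algebraMap ℝ _ (1 + 4 * c) + (4 : ℝ) • ω := by
    rw [hTT, sq, hωω, Algebra.smul_def, map_add, map_one, map_mul, map_ofNat, add_assoc]
  have hTunit : IsUnit T :=
    hT ▸ isUnit_one_add_smul_of_mul_self_eq_algebraMap hωω (by nlinarith)
  refine ⟨hTunit, ?_, hTT, ?_, by rw [hrevT]; exact hTunit.mul hTunit, ?_⟩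
  · rw [hT]
    exact add_mem (Submodule.one_le.mp (one_le_evenOdd_zero Q))
      (Submodule.smul_mem _ _ (eProd_univ_mem_evenOdd_zero hev))
  · rw [hTT', Algebra.algebraMap_eq_smul_one]
    exact Submodule.add_mem_sup (Submodule.smul_mem _ _ one_mem_gradeSubmodule_zero)
      (Submodule.smul_mem _ _ (by simpa using eProd_mem_gradeSubmodule (Q := Q) Finset.univ))
  · let e : Fin n := ⟨0, Nat.pos_of_ne_zero hn0⟩
    have he : Q (Pi.single e 1) ≠ 0 := by rcases hQ.1 e with h | h <;> simp [h]
    have hunit : IsUnit (egen Q e * ω) :=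
      (isUnit_of_mul_self_eq_algebraMap (egen_mul_self e) he).mul
        (isUnit_of_mul_self_eq_algebraMap hωω fun h => by simp [h] at hc)
    rw [hTT']
    exact algebraMap_add_smul_notMem_center four_ne_zero
      (eProd_univ_mul_egen_of_even hQ.2 hev e) hunit.ne_zero
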